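/- arXiv:1502.05122 — 6 statements merged into one kernel-verified Lean document; each statement's English description precedes it below -/
import Mathlib

section
/- Let η : ℤ → ℝ satisfy η(0) = 1, |η(m)| ≤ 1 for all m, η(2m) = η(m) and η(2m+1) = -(η(m)+η(m+1))/2 for all m ∈ ℤ. Define Σ(N) = ∑_{m=-N}^{N} η(m)². Then Σ(4N) ≤ (3/2)·Σ(2N) for all N ≥ 1. -/
/-!
Splitting `Σ(4N)` by the parity of the index, the even terms give back `Σ(2N)` since
`η (2m) = η m`. Each odd term is `η (2k+1)² = (η k² + η (k+1)²) / 4 + η k η (k+1) / 2`, and the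
sum of the cross terms `η m η (m+1)` over `[-2N, 2N)` is nonpositive: grouping `m = 2k, 2k+1`
gives `η (2k+1) (η k + η (k+1)) = -(η k + η (k+1))² / 2`. Hence the odd terms contribute at
most `Σ(2N) / 2`.
-/

open Finset

namespace Int

theorem sum_Ico_two_mul {M : Type*} [AddCommMonoid M] (f : ℤ → M) (a b : ℤ) :
    ∑ m ∈ Ico (2 * a) (2 * b), f m = ∑ k ∈ Ico a b, (f (2 * k) + f (2 * k + 1)) := by
  rcases lt_or_ge b a with hba | hab
  · rw [Ico_eq_empty_of_le hba.le, Ico_eq_empty_of_le (by omega), sum_empty, sum_empty]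
  induction b, hab using Int.leInduction with
  | base => simp
  | succ b hab ih =>
    have hpair : Ico (2 * b) (2 * (b + 1)) = {2 * b, 2 * b + 1} := by
      ext m; simp only [mem_Ico, mem_insert, mem_singleton]; omega
    rw [← Ico_union_Ico_eq_Ico (by omega : 2 * a ≤ 2 * b) (by omega),
      sum_union (Ico_disjoint_Ico_consecutive _ _ _), ih, hpair, sum_pair (by omega),
      Ico_add_one_right_eq_Icc, ← Ico_insert_right hab, sum_insert right_notMem_Ico, add_comm]

theorem sum_Icc_two_mul {M : Type*} [AddCommMonoid M] (f : ℤ → M) {a b : ℤ} (hab : a ≤ b) :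
    ∑ m ∈ Icc (2 * a) (2 * b), f m = ∑ k ∈ Icc a b, f (2 * k) + ∑ k ∈ Ico a b, f (2 * k + 1) := by
  rw [← Ico_insert_right (by omega), ← Ico_insert_right hab, sum_insert right_notMem_Ico,
    sum_insert right_notMem_Ico, sum_Ico_two_mul, sum_add_distrib, add_assoc]

end Int

section Recursion

variable {η : ℤ → ℝ} (heven : ∀ m : ℤ, η (2 * m) = η m)
  (hodd : ∀ m : ℤ, η (2 * m + 1) = -(η m + η (m + 1)) / 2)

include heven hodd

theorem sum_Ico_mul_succ_nonpos (a b : ℤ) :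
    ∑ m ∈ Ico (2 * a) (2 * b), η m * η (m + 1) ≤ 0 := by
  rw [Int.sum_Ico_two_mul]
  refine sum_nonpos fun k _ => ?_
  rw [show 2 * k + 1 + 1 = 2 * (k + 1) by ring, heven, heven, hodd]
  nlinarith [sq_nonneg (η k + η (k + 1))]

theorem sum_Ico_sq_odd_le (a b : ℤ) :
    ∑ k ∈ Ico (2 * a) (2 * b), η (2 * k + 1) ^ 2 ≤
      (1 / 2) * ∑ k ∈ Icc (2 * a) (2 * b), η k ^ 2 := by
  have hsq (k : ℤ) : η (2 * k + 1) ^ 2 = (η k ^ 2 + η (k + 1) ^ 2) / 4 + η k * η (k + 1) / 2 := by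
    rw [hodd]; ring
  have hleft : ∑ k ∈ Ico (2 * a) (2 * b), η k ^ 2 ≤ ∑ k ∈ Icc (2 * a) (2 * b), η k ^ 2 :=
    sum_le_sum_of_subset_of_nonneg Ico_subset_Icc_self fun _ _ _ => sq_nonneg _
  have hright : ∑ k ∈ Ico (2 * a) (2 * b), η (k + 1) ^ 2 ≤ ∑ k ∈ Icc (2 * a) (2 * b), η k ^ 2 := by
    rw [sum_Ico_add' (fun k => η k ^ 2)]
    refine sum_le_sum_of_subset_of_nonneg ?_ fun _ _ _ => sq_nonneg _
    intro m; simp only [mem_Ico, mem_Icc]; omega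
  have hcross := sum_Ico_mul_succ_nonpos heven hodd a b
  simp only [hsq, sum_add_distrib, ← sum_div]
  linarith

end Recursion

theorem tm_sigma_ineq_general (η : ℤ → ℝ)
    (heven : ∀ m : ℤ, η (2 * m) = η m)
    (hodd : ∀ m : ℤ, η (2 * m + 1) = -(η m + η (m + 1)) / 2) :
    ∀ N : ℕ, 1 ≤ N →
      (∑ m ∈ Finset.Icc (-(4 * N : ℤ)) (4 * N), (η m) ^ 2) ≤
        (3 / 2) * ∑ m ∈ Finset.Icc (-(2 * N : ℤ)) (2 * N), (η m) ^ 2 := by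
  intro N _
  have hodd_le := sum_Ico_sq_odd_le heven hodd (-N) N
  rw [show -(4 * N : ℤ) = 2 * -(2 * N) by ring, show (4 * N : ℤ) = 2 * (2 * N) by ring,
    Int.sum_Icc_two_mul _ (by omega)]
  rw [show (2 * -N : ℤ) = -(2 * N) by ring] at hodd_le
  simp only [heven]
  linarith

/-- For the Thue–Morse autocorrelation, `Σ(4N) ≤ (3/2) Σ(2N)` where
`Σ(N) = ∑_{m=-N}^{N} η(m)²`. -/
theorem tm_sigma_ineq (η : ℤ → ℝ)
    (h0 : η 0 = 1)
    (hb : ∀ m : ℤ, |η m| ≤ 1)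
    (heven : ∀ m : ℤ, η (2 * m) = η m)
    (hodd : ∀ m : ℤ, η (2 * m + 1) = -(η m + η (m + 1)) / 2) :
    ∀ N : ℕ, 1 ≤ N →
      (∑ m ∈ Finset.Icc (-(4 * N : ℤ)) (4 * N), (η m) ^ 2) ≤
        (3 / 2) * ∑ m ∈ Finset.Icc (-(2 * N : ℤ)) (2 * N), (η m) ^ 2 :=
  tm_sigma_ineq_general η heven hodd
end

section
/- Let η : ℤ → ℝ with |η(m)| ≤ 1 satisfy Σ(4N) ≤ (3/2)·Σ(2N) for all N ≥ 1, where Σ(N) = ∑_{m=-N}^{N} η(m)². Then lim_{N→∞} Σ(N)/N = 0. -/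
open Filter

/-!
Iterating `S (4N) ≤ r S (2N)` along `N = 2^k` gives `S (2^(k+1)) ≤ r^k S 2`. Since `S` is monotone,
for `2^k ≤ N < 2^(k+1)` this yields `S N / N ≤ (r/2)^k S 2`, which tends to `0` when `r < 2`
because `k = log₂ N → ∞`.
-/

theorem Nat.tendsto_log_atTop {b : ℕ} (hb : 1 < b) : Tendsto (Nat.log b) atTop atTop :=
  tendsto_atTop_atTop_of_monotone (fun _ _ h => Nat.log_mono_right h)
    fun k => ⟨b ^ k, (Nat.log_pow hb k).ge⟩

section Dyadic

variable {S : ℕ → ℝ} {r : ℝ}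

theorem apply_two_pow_succ_le_pow_mul (hr : 0 ≤ r)
    (hrec : ∀ N : ℕ, 1 ≤ N → S (4 * N) ≤ r * S (2 * N)) (k : ℕ) :
    S (2 ^ (k + 1)) ≤ r ^ k * S 2 := by
  induction k with
  | zero => simp
  | succ k ih =>
    calc S (2 ^ (k + 1 + 1)) = S (4 * 2 ^ k) := by ring_nf
      _ ≤ r * S (2 * 2 ^ k) := hrec _ k.one_le_two_pow
      _ = r * S (2 ^ (k + 1)) := by ring_nf
      _ ≤ r * (r ^ k * S 2) := by gcongr
      _ = r ^ (k + 1) * S 2 := by ring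

theorem div_le_pow_log_mul_of_le_mul_double (hmono : Monotone S) (hS2 : 0 ≤ S 2) (hr : 0 ≤ r)
    (hrec : ∀ N : ℕ, 1 ≤ N → S (4 * N) ≤ r * S (2 * N)) {N : ℕ} (hN : N ≠ 0) :
    S N / N ≤ (r / 2) ^ Nat.log 2 N * S 2 := by
  set k := Nat.log 2 N
  have hNk : (2 : ℝ) ^ k ≤ N := by exact_mod_cast Nat.pow_log_le_self 2 hN
  rw [div_le_iff₀ (by positivity)]
  calc S N ≤ S (2 ^ (k + 1)) := hmono (Nat.lt_pow_succ_log_self one_lt_two N).le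
    _ ≤ r ^ k * S 2 := apply_two_pow_succ_le_pow_mul hr hrec k
    _ = (r / 2) ^ k * S 2 * 2 ^ k := by rw [div_pow]; field_simp
    _ ≤ (r / 2) ^ k * S 2 * N := by gcongr

theorem tendsto_div_zero_of_le_mul_double (hmono : Monotone S) (hnonneg : 0 ≤ S) (hr : 0 ≤ r)
    (hr2 : r < 2) (hrec : ∀ N : ℕ, 1 ≤ N → S (4 * N) ≤ r * S (2 * N)) :
    Tendsto (fun N : ℕ => S N / N) atTop (nhds 0) := by
  have hgeom : Tendsto (fun N : ℕ => (r / 2) ^ Nat.log 2 N * S 2) atTop (nhds 0) := by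
    simpa using ((tendsto_pow_atTop_nhds_zero_of_lt_one (by positivity) (by linarith)).comp
      (Nat.tendsto_log_atTop one_lt_two)).mul_const (S 2)
  refine squeeze_zero' (.of_forall fun N => div_nonneg (hnonneg N) N.cast_nonneg) ?_ hgeom
  filter_upwards [eventually_ne_atTop 0] with N hN
  exact div_le_pow_log_mul_of_le_mul_double hmono (hnonneg 2) hr hrec hN

end Dyadic

theorem monotone_sum_sq_Icc_neg (η : ℤ → ℝ) :
    Monotone fun N : ℕ => ∑ m ∈ Finset.Icc (-(N : ℤ)) (N : ℤ), η m ^ 2 := fun _ _ h =>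
  Finset.sum_le_sum_of_subset_of_nonneg (Finset.Icc_subset_Icc (by simpa using h) (by simpa using h))
    fun _ _ _ => sq_nonneg _

theorem sigma_sublinear_general (η : ℤ → ℝ)
    (S : ℕ → ℝ)
    (hS : ∀ N : ℕ, S N = ∑ m ∈ Finset.Icc (-(N : ℤ)) (N : ℤ), (η m) ^ 2)
    (hrec : ∀ N : ℕ, 1 ≤ N → S (4 * N) ≤ (3 / 2) * S (2 * N)) :
    Tendsto (fun N : ℕ => S N / N) atTop (nhds 0) := by
  have hS' : S = fun N : ℕ => ∑ m ∈ Finset.Icc (-(N : ℤ)) (N : ℤ), η m ^ 2 := funext hS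
  have hmono : Monotone S := hS' ▸ monotone_sum_sq_Icc_neg η
  have hnonneg : 0 ≤ S := fun N => by rw [hS]; positivity
  exact tendsto_div_zero_of_le_mul_double hmono hnonneg (by norm_num) (by norm_num) hrec

/-- If `|η| ≤ 1` and `Σ(4N) ≤ (3/2) Σ(2N)` for all `N ≥ 1`, where
`Σ(N) = ∑_{m=-N}^{N} η(m)²`, then `Σ(N)/N → 0`. -/
theorem sigma_sublinear (η : ℤ → ℝ)
    (hb : ∀ m : ℤ, |η m| ≤ 1)
    (S : ℕ → ℝ)
    (hS : ∀ N : ℕ, S N = ∑ m ∈ Finset.Icc (-(N : ℤ)) (N : ℤ), (η m) ^ 2)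
    (hrec : ∀ N : ℕ, 1 ≤ N → S (4 * N) ≤ (3 / 2) * S (2 * N)) :
    Tendsto (fun N : ℕ => S N / N) atTop (nhds 0) :=
  sigma_sublinear_general η S hS hrec
end

section
/- Let η : ℤ → ℝ satisfy η(2m) = η(m) for all m ∈ ℕ and η(1) = -(1/3)·η(0). If lim_{m→∞} η(m) = 0, then η(0) = 0 and consequently η(m) = 0 for all m ≥ 0 whenever η additionally satisfies η(2m+1) = -(η(m)+η(m+1))/2. -/
open Filter

/-! A sequence invariant under `m ↦ 2m` is constant along each orbit `2ᵏm`, and for `m ≥ 1` this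
orbit tends to infinity; so `η(m) → 0` forces `η(m) = 0` for every `m ≥ 1`. In particular
`η(1) = 0`, and then `η(1) = -η(0)/3` gives `η(0) = 0`. -/

theorem apply_pow_mul_eq_of_apply_mul_eq {X : Type*} {f : ℕ → X} {b : ℕ}
    (hf : ∀ m, f (b * m) = f m) (k m : ℕ) : f (b ^ k * m) = f m := by
  induction k with
  | zero => simp
  | succ k ih => rw [pow_succ', mul_assoc, hf, ih]

theorem Filter.Tendsto.apply_eq_of_apply_mul_eq {X : Type*} [TopologicalSpace X] [T2Space X]
    {f : ℕ → X} {L : X} (hlim : Tendsto f atTop (nhds L)) {b : ℕ} (hb : 1 < b)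
    (hf : ∀ m, f (b * m) = f m) {m : ℕ} (hm : m ≠ 0) : f m = L := by
  have horbit : Tendsto (fun k => b ^ k * m) atTop atTop :=
    tendsto_atTop_mono (fun k => Nat.le_mul_of_pos_right _ (Nat.pos_of_ne_zero hm))
      (tendsto_pow_atTop_atTop_of_one_lt hb)
  have hconst : Tendsto (fun _ : ℕ => f m) atTop (nhds L) := by
    simpa only [Function.comp_def, apply_pow_mul_eq_of_apply_mul_eq hf] using hlim.comp horbit
  exact tendsto_nhds_unique tendsto_const_nhds hconst

/-- Vanishing of the absolutely continuous part of the Thue–Morse measure: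
if `η(2m)=η(m)` on ℕ, `η(1) = -η(0)/3` and `η(m) → 0`, then `η(0) = 0`; and if in
addition the odd recursion holds, then `η(m) = 0` for all `m ≥ 0`. -/
theorem tm_ac_part_vanishes (η : ℤ → ℝ)
    (heven : ∀ m : ℕ, η (2 * (m : ℤ)) = η (m : ℤ))
    (h1 : η 1 = -(1 / 3) * η 0)
    (hlim : Tendsto (fun m : ℕ => η (m : ℤ)) atTop (nhds 0)) :
    η 0 = 0 ∧
      ((∀ m : ℤ, η (2 * m + 1) = -(η m + η (m + 1)) / 2) →
        ∀ m : ℕ, η (m : ℤ) = 0) := by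
  have hpos : ∀ m : ℕ, m ≠ 0 → η m = 0 := fun m hm =>
    hlim.apply_eq_of_apply_mul_eq one_lt_two (fun m => by push_cast; exact heven m) hm
  have h0 : η 0 = 0 := by
    have := hpos 1 one_ne_zero
    rw [Nat.cast_one] at this
    linarith
  refine ⟨h0, fun _ m => ?_⟩
  rcases eq_or_ne m 0 with rfl | hm
  · exact_mod_cast h0
  · exact hpos m hm
end

section
/- Let η, θ : ℤ → ℝ satisfy η(0) = 1, θ(0) = 0 and the Rudin–Shapiro recursions: η(4m) = ((1+(-1)^m)/2)η(m); η(4m+1) = ((1-(-1)^m)/4)η(m) + ((-1)^m/4)θ(m) - (1/4)θ(m+1); η(4m+2) = 0; η(4m+3) = ((1+(-1)^m)/4)η(m+1) - ((-1)^m/4)θ(m) + (1/4)θ(m+1); θ(4m) = 0; θ(4m+1) = ((1-(-1)^m)/4)η(m) - ((-1)^m/4)θ(m) + (1/4)θ(m+1); θ(4m+2) = ((-1)^m/2)θ(m) + (1/2)θ(m+1); θ(4m+3) = -((1+(-1)^m)/4)η(m+1) - ((-1)^m/4)θ(m) + (1/4)θ(m+1), for all m ∈ ℤ. If η and θ are bounded,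 then η(m) = δ_{m,0} and θ(m) = 0 for all m ∈ ℤ. -/
/-!
The recursions are linear and express the values at `k` through the values at `k / 4` and
`k / 4 + 1`, both strictly closer to `0` than `k` once `|k| ≥ 2`; at `k = ±1`, once `θ 0 = 0`,
they read `θ (±1) = θ (±1) / 4` and then force `η (±1) = 0`. Hence a solution vanishing at `0`
vanishes everywhere, so a solution is determined by `η 0` and `θ 0`, and `(δ_{·,0}, 0)` is one.
-/

def IsRudinShapiroSolution (η θ : ℤ → ℝ) : Prop :=
  ∀ m : ℤ,
    η (4 * m) = ((1 + ((m.negOnePow : ℤ) : ℝ)) / 2) * η m ∧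
    η (4 * m + 1) = ((1 - ((m.negOnePow : ℤ) : ℝ)) / 4) * η m
      + (((m.negOnePow : ℤ) : ℝ) / 4) * θ m - (1 / 4) * θ (m + 1) ∧
    η (4 * m + 2) = 0 ∧
    η (4 * m + 3) = ((1 + ((m.negOnePow : ℤ) : ℝ)) / 4) * η (m + 1)
      - (((m.negOnePow : ℤ) : ℝ) / 4) * θ m + (1 / 4) * θ (m + 1) ∧
    θ (4 * m) = 0 ∧
    θ (4 * m + 1) = ((1 - ((m.negOnePow : ℤ) : ℝ)) / 4) * η m
      - (((m.negOnePow : ℤ) : ℝ) / 4) * θ m + (1 / 4) * θ (m + 1) ∧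
    θ (4 * m + 2) = (((m.negOnePow : ℤ) : ℝ) / 2) * θ m + (1 / 2) * θ (m + 1) ∧
    θ (4 * m + 3) = -((1 + ((m.negOnePow : ℤ) : ℝ)) / 4) * η (m + 1)
      - (((m.negOnePow : ℤ) : ℝ) / 4) * θ m + (1 / 4) * θ (m + 1)

namespace IsRudinShapiroSolution

theorem sub {η₁ θ₁ η₂ θ₂ : ℤ → ℝ} (h₁ : IsRudinShapiroSolution η₁ θ₁)
    (h₂ : IsRudinShapiroSolution η₂ θ₂) : IsRudinShapiroSolution (η₁ - η₂) (θ₁ - θ₂) := by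
  intro m
  obtain ⟨a₁, a₂, a₃, a₄, a₅, a₆, a₇, a₈⟩ := h₁ m
  obtain ⟨b₁, b₂, b₃, b₄, b₅, b₆, b₇, b₈⟩ := h₂ m
  simp only [Pi.sub_apply]
  exact ⟨by linear_combination a₁ - b₁, by linear_combination a₂ - b₂,
    by linear_combination a₃ - b₃, by linear_combination a₄ - b₄,
    by linear_combination a₅ - b₅, by linear_combination a₆ - b₆,
    by linear_combination a₇ - b₇, by linear_combination a₈ - b₈⟩

variable {η θ : ℤ → ℝ}

theorem apply_one_and_neg_one_eq_zero (h : IsRudinShapiroSolution η θ) (hθ0 : θ 0 = 0) :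
    η 1 = 0 ∧ θ 1 = 0 ∧ η (-1) = 0 ∧ θ (-1) = 0 := by
  obtain ⟨-, hη1, -, -, -, hθ1, -, -⟩ := h 0
  obtain ⟨-, -, -, hηm1, -, -, -, hθm1⟩ := h (-1)
  norm_num [hθ0] at hη1 hθ1 hηm1 hθm1
  have hθ1' : θ 1 = 0 := by linarith
  have hθm1' : θ (-1) = 0 := by linarith
  exact ⟨by linarith, hθ1', by linarith, hθm1'⟩

theorem apply_eq_zero_of_ediv_four (h : IsRudinShapiroSolution η θ) (k : ℤ)
    (hη : η (k / 4) = 0) (hθ : θ (k / 4) = 0) (hη' : η (k / 4 + 1) = 0)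
    (hθ' : θ (k / 4 + 1) = 0) : η k = 0 ∧ θ k = 0 := by
  obtain ⟨e₀, e₁, e₂, e₃, t₀, t₁, t₂, t₃⟩ := h (k / 4)
  simp only [hη, hθ, hη', hθ', mul_zero, add_zero, sub_zero] at e₀ e₁ e₃ t₁ t₂ t₃
  rcases (by omega : k = 4 * (k / 4) ∨ k = 4 * (k / 4) + 1 ∨ k = 4 * (k / 4) + 2 ∨
    k = 4 * (k / 4) + 3) with hk | hk | hk | hk <;> rw [hk]
  exacts [⟨e₀, t₀⟩, ⟨e₁, t₁⟩, ⟨e₂, t₂⟩, ⟨e₃, t₃⟩]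

theorem eq_zero_of_apply_zero (h : IsRudinShapiroSolution η θ) (hη0 : η 0 = 0)
    (hθ0 : θ 0 = 0) : η = 0 ∧ θ = 0 := by
  obtain ⟨hη1, hθ1, hηm1, hθm1⟩ := h.apply_one_and_neg_one_eq_zero hθ0
  suffices key : ∀ n : ℕ, ∀ k : ℤ, k.natAbs = n → η k = 0 ∧ θ k = 0 from
    ⟨funext fun k => (key _ k rfl).1, funext fun k => (key _ k rfl).2⟩
  intro n
  induction n using Nat.strong_induction_on with
  | _ n ih =>
    intro k hk
    rcases (by omega : k = -1 ∨ k = 0 ∨ k = 1 ∨ 2 ≤ n) with rfl | rfl | rfl | hn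
    · exact ⟨hηm1, hθm1⟩
    · exact ⟨hη0, hθ0⟩
    · exact ⟨hη1, hθ1⟩
    obtain ⟨hη, hθ⟩ := ih _ (by omega) (k / 4) rfl
    obtain ⟨hη', hθ'⟩ := ih _ (by omega) (k / 4 + 1) rfl
    exact h.apply_eq_zero_of_ediv_four k hη hθ hη' hθ'

end IsRudinShapiroSolution

theorem isRudinShapiroSolution_delta :
    IsRudinShapiroSolution (fun m => if m = 0 then 1 else 0) 0 := by
  intro m
  rcases (by omega : m = 0 ∨ m = -1 ∨ m ≠ 0 ∧ m + 1 ≠ 0) with rfl | rfl | ⟨h0, h1⟩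
  · norm_num
  · norm_num
  · simp [h0, h1]
    omega

theorem rs_autocorrelation_trivial_general (η θ : ℤ → ℝ)
    (hη0 : η 0 = 1) (hθ0 : θ 0 = 0)
    (hrec : ∀ m : ℤ,
      η (4 * m) = ((1 + ((m.negOnePow : ℤ) : ℝ)) / 2) * η m ∧
      η (4 * m + 1) = ((1 - ((m.negOnePow : ℤ) : ℝ)) / 4) * η m
        + (((m.negOnePow : ℤ) : ℝ) / 4) * θ m - (1 / 4) * θ (m + 1) ∧
      η (4 * m + 2) = 0 ∧
      η (4 * m + 3) = ((1 + ((m.negOnePow : ℤ) : ℝ)) / 4) * η (m + 1)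
        - (((m.negOnePow : ℤ) : ℝ) / 4) * θ m + (1 / 4) * θ (m + 1) ∧
      θ (4 * m) = 0 ∧
      θ (4 * m + 1) = ((1 - ((m.negOnePow : ℤ) : ℝ)) / 4) * η m
        - (((m.negOnePow : ℤ) : ℝ) / 4) * θ m + (1 / 4) * θ (m + 1) ∧
      θ (4 * m + 2) = (((m.negOnePow : ℤ) : ℝ) / 2) * θ m + (1 / 2) * θ (m + 1) ∧
      θ (4 * m + 3) = -((1 + ((m.negOnePow : ℤ) : ℝ)) / 4) * η (m + 1)
        - (((m.negOnePow : ℤ) : ℝ) / 4) * θ m + (1 / 4) * θ (m + 1)) :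
    (∀ m : ℤ, η m = if m = 0 then 1 else 0) ∧ (∀ m : ℤ, θ m = 0) := by
  have hdiff : IsRudinShapiroSolution (η - fun m => if m = 0 then 1 else 0) (θ - 0) :=
    IsRudinShapiroSolution.sub hrec isRudinShapiroSolution_delta
  obtain ⟨hη, hθ⟩ := hdiff.eq_zero_of_apply_zero (by simp [hη0]) (by simp [hθ0])
  exact ⟨fun m => sub_eq_zero.mp (congrFun hη m), fun m => by simpa using congrFun hθ m⟩

/-- The unique bounded solution of the Rudin–Shapiro autocorrelation recursions with
`η(0)=1`, `θ(0)=0` is `η(m) = δ_{m,0}`, `θ ≡ 0`. -/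
theorem rs_autocorrelation_trivial (η θ : ℤ → ℝ)
    (hη0 : η 0 = 1) (hθ0 : θ 0 = 0)
    (hbound : ∃ C : ℝ, ∀ m : ℤ, |η m| ≤ C ∧ |θ m| ≤ C)
    (hrec : ∀ m : ℤ,
      η (4 * m) = ((1 + ((m.negOnePow : ℤ) : ℝ)) / 2) * η m ∧
      η (4 * m + 1) = ((1 - ((m.negOnePow : ℤ) : ℝ)) / 4) * η m
        + (((m.negOnePow : ℤ) : ℝ) / 4) * θ m - (1 / 4) * θ (m + 1) ∧
      η (4 * m + 2) = 0 ∧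
      η (4 * m + 3) = ((1 + ((m.negOnePow : ℤ) : ℝ)) / 4) * η (m + 1)
        - (((m.negOnePow : ℤ) : ℝ) / 4) * θ m + (1 / 4) * θ (m + 1) ∧
      θ (4 * m) = 0 ∧
      θ (4 * m + 1) = ((1 - ((m.negOnePow : ℤ) : ℝ)) / 4) * η m
        - (((m.negOnePow : ℤ) : ℝ) / 4) * θ m + (1 / 4) * θ (m + 1) ∧
      θ (4 * m + 2) = (((m.negOnePow : ℤ) : ℝ) / 2) * θ m + (1 / 2) * θ (m + 1) ∧
      θ (4 * m + 3) = -((1 + ((m.negOnePow : ℤ) : ℝ)) / 4) * η (m + 1)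
        - (((m.negOnePow : ℤ) : ℝ) / 4) * θ m + (1 / 4) * θ (m + 1)) :
    (∀ m : ℤ, η m = if m = 0 then 1 else 0) ∧ (∀ m : ℤ, θ m = 0) :=
  rs_autocorrelation_trivial_general η θ hη0 hθ0 hrec
end

section
/- Let (X(n))_{n∈ℤ} be an i.i.d. family of random variables taking values 1 and -1 with probabilities p and 1-p. Then, almost surely, for every m ∈ ℤ, lim_{N→∞} (1/(2N+1)) ∑_{n=-N}^{N} X(n)·X(n-m) = (2p-1)² + 4p(1-p)·δ_{m,0}. -/
/-!
For each `m` the products `X n * X (n - m)` are identically distributed, and they are independent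
along any arithmetic progression of step larger than `|m|`, where they involve disjoint pairs of
coordinates. The strong law of large numbers applies to each such progression, and splitting `ℤ`
into finitely many of them shows that the two-sided averages tend to `E[X 0 * X (-m)]`. This is
`(2p - 1)²` for `m ≠ 0` by independence, and `E[X 0 ^ 2] = 1` for `m = 0`.
-/

open Filter MeasureTheory ProbabilityTheory Finset Topology

theorem Finset.sum_range_eq_sum_residues {M : Type*} [AddCommMonoid M] {k : ℕ} (hk : k ≠ 0)
    (u : ℕ → M) (n : ℕ) :
    ∑ i ∈ range n, u i =
      ∑ r ∈ range k, ∑ j ∈ range ((n + (k - 1 - r)) / k), u (r + k * j) := by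
  have hk : 0 < k := Nat.pos_of_ne_zero hk
  have hlt : ∀ r j, r < k → (r + k * j < n ↔ j < (n + (k - 1 - r)) / k) := by
    intro r j hr
    rw [Nat.lt_div_iff_mul_lt hk, mul_comm]
    omega
  rw [sum_sigma']
  refine sum_nbij' (fun i => ⟨i % k, i / k⟩) (fun x => x.1 + k * x.2) ?_ ?_ ?_ ?_ ?_
  · intro i hi
    simp only [mem_range, mem_sigma] at hi ⊢
    refine ⟨Nat.mod_lt _ hk, (hlt _ _ (Nat.mod_lt _ hk)).1 ?_⟩
    rwa [Nat.mod_add_div]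
  · rintro ⟨r, j⟩ h
    simp only [mem_range, mem_sigma] at h ⊢
    exact (hlt _ _ h.1).2 h.2
  · intro i _
    exact Nat.mod_add_div i k
  · rintro ⟨r, j⟩ h
    simp only [mem_range, mem_sigma] at h
    simp [Nat.add_mul_div_left _ _ hk, Nat.div_eq_of_lt h.1, Nat.mod_eq_of_lt h.1]
  · intro i _
    rw [Nat.mod_add_div]

theorem tendsto_add_div_div_atTop (a : ℕ) {k : ℕ} (hk : k ≠ 0) :
    Tendsto (fun n : ℕ => (((n + a) / k : ℕ) : ℝ) / n) atTop (𝓝 (1 / k)) := by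
  have hk' : (0 : ℝ) < k := by positivity
  have hlim : ∀ b : ℝ, Tendsto (fun n : ℕ => 1 / (k : ℝ) + b / n) atTop (𝓝 (1 / k)) := fun b => by
    simpa using tendsto_const_nhds.add (tendsto_const_div_atTop_nhds_zero_nat b)
  refine tendsto_of_tendsto_of_tendsto_of_le_of_le' (hlim (((a : ℝ) - k) / k)) (hlim (a / k))
    ?_ ?_ <;> filter_upwards [eventually_gt_atTop 0] with n hn
  · have : (n : ℝ) + a < k * ((n + a) / k : ℕ) + k := by
      exact_mod_cast Nat.lt_mul_div_succ (n + a) (Nat.pos_of_ne_zero hk)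
    rw [le_div_iff₀ (by positivity)]
    field_simp
    linarith
  · have : (k : ℝ) * ((n + a) / k : ℕ) ≤ n + a := by exact_mod_cast Nat.mul_div_le (n + a) k
    rw [div_le_iff₀ (by positivity)]
    field_simp
    linarith

theorem tendsto_sum_range_div_of_residues {u : ℕ → ℝ} {k : ℕ} (hk : k ≠ 0) {μ : ℝ}
    (h : ∀ r < k, Tendsto (fun n : ℕ => (∑ j ∈ range n, u (r + k * j)) / n) atTop (𝓝 μ)) :
    Tendsto (fun n : ℕ => (∑ i ∈ range n, u i) / n) atTop (𝓝 μ) := by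
  set c : ℕ → ℕ → ℕ := fun r n => (n + (k - 1 - r)) / k
  have hsplit : ∀ n : ℕ, (∑ i ∈ range n, u i) / n =
      ∑ r ∈ range k, ((c r n : ℝ) / n) * ((∑ j ∈ range (c r n), u (r + k * j)) / c r n) := by
    intro n
    rw [sum_range_eq_sum_residues hk, sum_div]
    refine sum_congr rfl fun r _ => ?_
    rcases eq_or_ne (c r n) 0 with h0 | h0
    · simp [c, h0]
    · rw [div_mul_div_comm, mul_comm (c r n : ℝ), mul_div_mul_right _ _ (by exact_mod_cast h0)]
  have hlim : Tendsto (fun n : ℕ => ∑ r ∈ range k,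
      ((c r n : ℝ) / n) * ((∑ j ∈ range (c r n), u (r + k * j)) / c r n))
      atTop (𝓝 (∑ r ∈ range k, 1 / (k : ℝ) * μ)) :=
    tendsto_finsetSum _ fun r hr => (tendsto_add_div_div_atTop _ hk).mul
      ((h r (mem_range.1 hr)).comp
        ((Nat.tendsto_div_const_atTop hk).comp (tendsto_add_atTop_nat _)))
  rw [sum_const, card_range, nsmul_eq_mul, ← mul_assoc, mul_one_div_cancel (by positivity),
    one_mul] at hlim
  simpa only [hsplit] using hlim

/-- The enumeration `0, -1, 1, -2, 2, …` of `ℤ`. -/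
def zigzag (i : ℕ) : ℤ := if i % 2 = 0 then (i / 2 : ℕ) else -((i / 2 : ℕ) + 1 : ℤ)

theorem sum_Icc_neg_eq_sum_range_zigzag {M : Type*} [AddCommMonoid M] (f : ℤ → M) (N : ℕ) :
    ∑ n ∈ Icc (-(N : ℤ)) N, f n = ∑ i ∈ range (2 * N + 1), f (zigzag i) := by
  symm
  refine sum_nbij' zigzag (fun n => if 0 ≤ n then 2 * n.toNat else 2 * (-n).toNat - 1)
    ?_ ?_ ?_ ?_ (fun _ _ => rfl) <;> intro i hi <;>
    simp only [mem_range, mem_Icc, zigzag] at * <;> split_ifs <;> omega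

theorem natAbs_zigzag_add_two_mul_sub (r i j : ℕ) :
    (zigzag (r + 2 * i) - zigzag (r + 2 * j)).natAbs = (i - j : ℤ).natAbs := by
  simp only [zigzag]
  split_ifs <;> omega

section Probability

variable {Ω : Type*} [MeasurableSpace Ω] {P : Measure Ω}

theorem map_eq_smul_dirac_add_smul_dirac {β : Type*} [MeasurableSpace β]
    [MeasurableSingletonClass β] {Y : Ω → β} (hY : Measurable Y) {a b : β} (hab : a ≠ b)
    (h : ∀ᵐ ω ∂P, Y ω = a ∨ Y ω = b) :
    P.map Y = P {ω | Y ω = a} • Measure.dirac a + P {ω | Y ω = b} • Measure.dirac b := by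
  have hsupp : (P.map Y).restrict {a, b} = P.map Y :=
    Measure.restrict_eq_self_of_ae_mem <|
      (ae_map_iff hY.aemeasurable ((measurableSet_singleton b).insert a)).2 h
  rw [← hsupp, ← Set.singleton_union, Measure.restrict_union (by simpa using hab)
    (measurableSet_singleton b), Measure.restrict_singleton, Measure.restrict_singleton,
    Measure.map_apply hY (measurableSet_singleton a),
    Measure.map_apply hY (measurableSet_singleton b)]
  rfl

theorem integral_eq_of_map_eq {Y : Ω → ℝ} (hY : Measurable Y) {p : ℝ} (hp0 : 0 ≤ p)
    (hp1 : p ≤ 1) (hlaw : P.map Y =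
      ENNReal.ofReal p • Measure.dirac 1 + ENNReal.ofReal (1 - p) • Measure.dirac (-1)) :
    ∫ ω, Y ω ∂P = 2 * p - 1 := by
  rw [← integral_map (f := fun x => x) hY.aemeasurable aestronglyMeasurable_id, hlaw,
    integral_add_measure, integral_smul_measure, integral_smul_measure, integral_dirac,
    integral_dirac, ENNReal.toReal_ofReal hp0, ENNReal.toReal_ofReal (by linarith)]
  · simp only [smul_eq_mul]
    ring
  all_goals exact (integrable_dirac (by simp)).smul_measure ENNReal.ofReal_ne_top

variable {X : ℤ → Ω → ℝ}

theorem identDistrib_mul_sub (hindep : iIndepFun X P)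
    (hident : ∀ i j, IdentDistrib (X i) (X j) P P) (m a c : ℤ) :
    IdentDistrib (fun ω => X a ω * X (a - m) ω) (fun ω => X c ω * X (c - m) ω) P P := by
  rcases eq_or_ne m 0 with rfl | hm
  · simp only [sub_zero]
    exact (hident a c).comp (u := fun x => x * x) (by fun_prop)
  · have := hindep.isProbabilityMeasure
    exact ((hident a c).prodMk (hident _ _) (hindep.indepFun (by omega))
      (hindep.indepFun (by omega))).comp (measurable_fst.mul measurable_snd)

theorem ae_tendsto_sum_mul_sub_div (hmeas : ∀ n, Measurable (X n)) (hindep : iIndepFun X P)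
    (hident : ∀ i j, IdentDistrib (X i) (X j) P P) (hL2 : MemLp (X 0) 2 P) {m : ℤ}
    {ψ : ℕ → ℤ} (hψ : Pairwise fun i j => m.natAbs < (ψ i - ψ j).natAbs) :
    ∀ᵐ ω ∂P, Tendsto (fun n : ℕ => (∑ j ∈ range n, X (ψ j) ω * X (ψ j - m) ω) / n) atTop
      (𝓝 (∫ ω, X 0 ω * X (-m) ω ∂P)) := by
  have hL2' : ∀ n, MemLp (X n) 2 P := fun n => (hident 0 n).memLp_iff.1 hL2
  have hindepY : Pairwise (Function.onFun (· ⟂ᵢ[P] ·) fun j ω => X (ψ j) ω * X (ψ j - m) ω) :=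
    fun i j hij => by
      have := hψ hij
      exact hindep.indepFun_mul_mul hmeas _ _ _ _ (by omega) (by omega) (by omega) (by omega)
  have hmean := (identDistrib_mul_sub hindep hident m (ψ 0) 0).integral_eq
  rw [zero_sub] at hmean
  simpa only [hmean] using strong_law_ae_real _ ((hL2' _).integrable_mul (hL2' _)) hindepY
    fun j => identDistrib_mul_sub hindep hident m (ψ j) (ψ 0)

theorem ae_tendsto_autocorrelation (hmeas : ∀ n, Measurable (X n)) (hindep : iIndepFun X P)
    (hident : ∀ i j, IdentDistrib (X i) (X j) P P) (hL2 : MemLp (X 0) 2 P) :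
    ∀ᵐ ω ∂P, ∀ m : ℤ, Tendsto
      (fun N : ℕ => (∑ n ∈ Icc (-(N : ℤ)) N, X n ω * X (n - m) ω) / (2 * N + 1)) atTop
      (𝓝 (∫ ω, X 0 ω * X (-m) ω ∂P)) := by
  -- `zigzag` maps residue classes modulo `2 (|m| + 1)` to progressions of step `|m| + 1`
  have hres : ∀ m : ℤ, ∀ r : ℕ, ∀ᵐ ω ∂P, Tendsto (fun n : ℕ =>
      (∑ j ∈ range n, X (zigzag (r + 2 * (m.natAbs + 1) * j)) ω *
        X (zigzag (r + 2 * (m.natAbs + 1) * j) - m) ω) / n) atTop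
      (𝓝 (∫ ω, X 0 ω * X (-m) ω ∂P)) := fun m r =>
    ae_tendsto_sum_mul_sub_div hmeas hindep hident hL2 fun i j hij => by
      simp only [mul_assoc, natAbs_zigzag_add_two_mul_sub]
      rw [Nat.cast_mul, Nat.cast_mul, ← mul_sub, Int.natAbs_mul, Int.natAbs_natCast]
      exact Nat.lt_of_lt_of_le (Nat.lt_succ_self _) (Nat.le_mul_of_pos_right _ (by omega))
  simp_rw [← ae_all_iff] at hres
  filter_upwards [hres] with ω hω m
  have hcesaro := tendsto_sum_range_div_of_residues (u := fun i => X (zigzag i) ω *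
    X (zigzag i - m) ω) (by positivity) fun r _ => hω m r
  refine (hcesaro.comp (tendsto_atTop_mono (fun N => by rw [id]; omega) tendsto_id :
    Tendsto (fun N : ℕ => 2 * N + 1) atTop atTop)).congr fun N => ?_
  simp [sum_Icc_neg_eq_sum_range_zigzag]

theorem integral_mul_neg_eq_of_mul_self_eq_one [IsProbabilityMeasure P]
    (hmeas : ∀ n, Measurable (X n)) (hindep : iIndepFun X P)
    (hsq : ∀ᵐ ω ∂P, X 0 ω * X 0 ω = 1) {μ : ℝ} (hmean : ∀ n, ∫ ω, X n ω ∂P = μ) (m : ℤ) :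
    ∫ ω, X 0 ω * X (-m) ω ∂P = μ ^ 2 + (1 - μ ^ 2) * if m = 0 then 1 else 0 := by
  rcases eq_or_ne m 0 with rfl | hm
  · simp only [neg_zero, if_pos, integral_congr_ae hsq, integral_const, probReal_univ]
    ring
  · rw [if_neg hm, ← Pi.mul_def, (hindep.indepFun (by omega)).integral_mul_eq_mul_integral
      (hmeas _).aestronglyMeasurable (hmeas _).aestronglyMeasurable, hmean, hmean]
    ring

end Probability

/-- Almost sure autocorrelation of the Bernoulli coin-tossing comb: for an i.i.d.
family of `±1`-valued random variables with `P(X = 1) = p`, almost surely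
`(1/(2N+1)) ∑_{n=-N}^N X(n) X(n-m) → (2p-1)² + 4p(1-p) δ_{m,0}` for every `m`. -/
theorem bernoulli_comb_autocorrelation
    {Ω : Type*} [MeasurableSpace Ω] (P : Measure Ω) [IsProbabilityMeasure P]
    (p : ℝ) (hp0 : 0 ≤ p) (hp1 : p ≤ 1)
    (X : ℤ → Ω → ℝ)
    (hmeas : ∀ n, Measurable (X n))
    (hindep : iIndepFun X P)
    (hval : ∀ n, ∀ᵐ ω ∂P, X n ω = 1 ∨ X n ω = -1)
    (hdist : ∀ n, P {ω | X n ω = 1} = ENNReal.ofReal p)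
    (hdist' : ∀ n, P {ω | X n ω = -1} = ENNReal.ofReal (1 - p)) :
    ∀ᵐ ω ∂P, ∀ m : ℤ,
      Tendsto
        (fun N : ℕ => (1 / (2 * (N : ℝ) + 1)) *
          ∑ n ∈ Finset.Icc (-(N : ℤ)) (N : ℤ), X n ω * X (n - m) ω)
        atTop
        (nhds ((2 * p - 1) ^ 2 + 4 * p * (1 - p) * (if m = 0 then 1 else 0))) := by
  have hlaw : ∀ n, P.map (X n) =
      ENNReal.ofReal p • Measure.dirac 1 + ENNReal.ofReal (1 - p) • Measure.dirac (-1) :=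
    fun n => by
      rw [map_eq_smul_dirac_add_smul_dirac (hmeas n) (by norm_num) (hval n), hdist, hdist']
  have hident : ∀ i j, IdentDistrib (X i) (X j) P P := fun i j =>
    ⟨(hmeas i).aemeasurable, (hmeas j).aemeasurable, by rw [hlaw, hlaw]⟩
  have hsq : ∀ᵐ ω ∂P, X 0 ω * X 0 ω = 1 := by
    filter_upwards [hval 0] with ω h
    rcases h with h | h <;> simp [h]
  have hL2 : MemLp (X 0) 2 P := MemLp.of_bound (hmeas 0).aestronglyMeasurable 1 <| by
    filter_upwards [hval 0] with ω h
    rcases h with h | h <;> simp [h]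
  have hcorr := integral_mul_neg_eq_of_mul_self_eq_one hmeas hindep hsq
    fun n => integral_eq_of_map_eq (hmeas n) hp0 hp1 (hlaw n)
  filter_upwards [ae_tendsto_autocorrelation hmeas hindep hident hL2] with ω hω m
  rw [show 4 * p * (1 - p) = 1 - (2 * p - 1) ^ 2 by ring, ← hcorr m]
  simpa only [one_div_mul_eq_div] using hω m
end

section
/- Let w : ℤ → {±1} be a deterministic sequence and (X(n))_{n∈ℤ} an i.i.d. family with P(X(n)=1)=p, P(X(n)=-1)=1-p. Suppose that for all m ∈ ℤ the limit η(m) = lim_N (1/(2N+1)) ∑_{n=-N}^N w(n)w(n-m) exists and η(m) = δ_{m,0}. Then, almost surely, for all m ∈ ℤ, lim_N (1/(2N+1)) ∑_{n=-N}^N w(n)X(n)·w(n-m)X(n-m) = δ_{m,0}, independently of p. -/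
/-!
For `m ≠ 0` write `w(n)X(n) · w(n-m)X(n-m) = c(n) (X(n)X(n-m) - q²) + q² c(n)` with
`c(n) = w(n)w(n-m)` and `q = 𝔼 X(n) = 2p - 1`. The second part averages to `q² η(m) = 0`.
The centred terms are bounded, and two of them are independent as soon as their index pairs
`{n, n-m}` are disjoint, so each is correlated with at most three others. Hence the second moment
of a sum of `2N+1` of them is `O(N)`, the squared averages along `N = k²` have summable
expectations and tend to `0` almost surely, and bounded increments fill the gaps between squares.
For `m = 0` the product is just `w(n)²`, since `X(n)² = 1`.
-/

open Filter MeasureTheory ProbabilityTheory Finset Topology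

noncomputable def symmetricAverage (a : ℤ → ℝ) (N : ℕ) : ℝ :=
  (1 / (2 * (N : ℝ) + 1)) * ∑ n ∈ Icc (-(N : ℤ)) N, a n

lemma symmetricAverage_add_const_mul (a b : ℤ → ℝ) (r : ℝ) (N : ℕ) :
    symmetricAverage (fun n => a n + r * b n) N
      = symmetricAverage a N + r * symmetricAverage b N := by
  simp only [symmetricAverage, sum_add_distrib, ← mul_sum]
  ring

lemma card_Icc_neg_self (N : ℕ) : (#(Icc (-(N : ℤ)) N) : ℝ) = 2 * N + 1 := by
  rw [Int.card_Icc, show (N : ℤ) + 1 - -N = ((2 * N + 1 : ℕ) : ℤ) by push_cast; ring,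
    Int.toNat_natCast]
  push_cast; ring

lemma abs_sum_Icc_neg_sub_le {a : ℤ → ℝ} {C : ℝ} (ha : ∀ n, |a n| ≤ C) {M N : ℕ} (h : M ≤ N) :
    |∑ n ∈ Icc (-(N : ℤ)) N, a n - ∑ n ∈ Icc (-(M : ℤ)) M, a n| ≤ C * (2 * (N - M)) := by
  have hsub : Icc (-(M : ℤ)) M ⊆ Icc (-(N : ℤ)) N := Icc_subset_Icc (by omega) (by omega)
  rw [← sum_sdiff_eq_sub hsub]
  calc |∑ n ∈ Icc (-(N : ℤ)) N \ Icc (-(M : ℤ)) M, a n|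
      ≤ ∑ n ∈ Icc (-(N : ℤ)) N \ Icc (-(M : ℤ)) M, C :=
        (abs_sum_le_sum_abs _ _).trans (sum_le_sum fun n _ => ha n)
    _ = C * (2 * (N - M)) := by
      rw [sum_const, card_sdiff_of_subset hsub, nsmul_eq_mul, Nat.cast_sub (card_le_card hsub),
        card_Icc_neg_self, card_Icc_neg_self]
      ring

lemma tendsto_nat_sqrt_atTop : Tendsto Nat.sqrt atTop atTop :=
  tendsto_atTop_atTop_of_monotone (fun _ _ => Nat.sqrt_le_sqrt) fun k =>
    ⟨k ^ 2, (Nat.sqrt_eq' k).ge⟩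

lemma abs_symmetricAverage_le_sqrt_sq {a : ℤ → ℝ} {C : ℝ} (ha : ∀ n, |a n| ≤ C) (N : ℕ) :
    |symmetricAverage a N| ≤ |symmetricAverage a (N.sqrt ^ 2)| + 2 * C / N.sqrt := by
  set k := N.sqrt
  have hC : 0 ≤ C := (abs_nonneg _).trans (ha 0)
  have hk : k ^ 2 ≤ N := Nat.sqrt_le' N
  have hN : N ≤ k ^ 2 + 2 * k := by
    have := Nat.lt_succ_sqrt' N; rw [Nat.succ_eq_add_one] at this; nlinarith
  have hkN : ((k ^ 2 : ℕ) : ℝ) ≤ N := by exact_mod_cast hk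
  have hNk : (N : ℝ) ≤ k ^ 2 + 2 * k := by exact_mod_cast hN
  have hgap := abs_sum_Icc_neg_sub_le ha hk
  set S := ∑ n ∈ Icc (-(N : ℤ)) N, a n
  set T := ∑ n ∈ Icc (-((k ^ 2 : ℕ) : ℤ)) (k ^ 2 : ℕ), a n
  have hST : |S| ≤ |T| + 4 * C * k := by
    have := abs_sub_abs_le_abs_sub S T
    push_cast at hkN hgap ⊢
    nlinarith
  have hden : (0 : ℝ) < 2 * ((k ^ 2 : ℕ) : ℝ) + 1 := by positivity
  have hsmall : 4 * C * k / (2 * ((k ^ 2 : ℕ) : ℝ) + 1) ≤ 2 * C / k := by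
    rcases k.eq_zero_or_pos with hk0 | hk0
    · simp [hk0]
    rw [div_le_div_iff₀ hden (by positivity)]
    push_cast
    nlinarith
  simp only [symmetricAverage, abs_mul, one_div, abs_inv]
  rw [abs_of_pos (by positivity : (0 : ℝ) < 2 * N + 1), abs_of_pos hden]
  calc (2 * (N : ℝ) + 1)⁻¹ * |S| ≤ (2 * ((k ^ 2 : ℕ) : ℝ) + 1)⁻¹ * (|T| + 4 * C * k) := by
        gcongr
    _ ≤ (2 * ((k ^ 2 : ℕ) : ℝ) + 1)⁻¹ * |T| + 2 * C / k := by
        rw [mul_add, inv_mul_eq_div (b := 4 * C * k)]; gcongr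

lemma tendsto_symmetricAverage_of_tendsto_comp_sq {a : ℤ → ℝ} {C : ℝ} (ha : ∀ n, |a n| ≤ C)
    (h : Tendsto (fun k => symmetricAverage a (k ^ 2)) atTop (𝓝 0)) :
    Tendsto (symmetricAverage a) atTop (𝓝 0) := by
  have hlim : Tendsto (fun k : ℕ => |symmetricAverage a (k ^ 2)| + 2 * C / k) atTop (𝓝 0) := by
    simpa using h.abs.add (tendsto_const_div_atTop_nhds_zero_nat (2 * C))
  exact squeeze_zero_norm (abs_symmetricAverage_le_sqrt_sq ha) (hlim.comp tendsto_nat_sqrt_atTop)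

lemma summable_inv_two_mul_sq_add_one :
    Summable fun k : ℕ => (2 * ((k ^ 2 : ℕ) : ℝ) + 1)⁻¹ := by
  refine Summable.of_norm_bounded_eventually_nat (Real.summable_nat_pow_inv.2 one_lt_two) ?_
  filter_upwards [eventually_ge_atTop 1] with k hk
  rw [Real.norm_of_nonneg (by positivity)]
  push_cast
  gcongr
  linarith [(by positivity : (0 : ℝ) ≤ (k : ℝ) ^ 2)]

section Probability

variable {Ω : Type*} [MeasurableSpace Ω] {μ : Measure Ω}

lemma integral_sq_sum_le_of_sparse_correlations {ι : Type*} [DecidableEq ι] (s : Finset ι)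
    {V : ι → Ω → ℝ} {B : ℝ} {K : ℕ} (D : ι → Finset ι)
    (hint : ∀ i j, Integrable (fun ω => V i ω * V j ω) μ)
    (hB : ∀ i j, |∫ ω, V i ω * V j ω ∂μ| ≤ B) (hD : ∀ i, #(D i) ≤ K)
    (horth : ∀ i j, j ∉ D i → ∫ ω, V i ω * V j ω ∂μ = 0) :
    ∫ ω, (∑ i ∈ s, V i ω) ^ 2 ∂μ ≤ K * B * #s := by
  have hrow : ∀ i, ∑ j ∈ s, ∫ ω, V i ω * V j ω ∂μ ≤ K * B := by
    intro i
    have hB0 : 0 ≤ B := (abs_nonneg _).trans (hB i i)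
    calc ∑ j ∈ s, ∫ ω, V i ω * V j ω ∂μ = ∑ j ∈ s ∩ D i, ∫ ω, V i ω * V j ω ∂μ :=
          (sum_subset inter_subset_left fun j hj hjD =>
            horth i j fun h => hjD (mem_inter.2 ⟨hj, h⟩)).symm
      _ ≤ ∑ j ∈ s ∩ D i, B := sum_le_sum fun j _ => le_of_abs_le (hB i j)
      _ ≤ K * B := by
          rw [sum_const, nsmul_eq_mul]
          gcongr
          exact_mod_cast (card_le_card inter_subset_right).trans (hD i)
  calc ∫ ω, (∑ i ∈ s, V i ω) ^ 2 ∂μ = ∑ i ∈ s, ∑ j ∈ s, ∫ ω, V i ω * V j ω ∂μ := by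
        simp_rw [sq, sum_mul_sum]
        rw [integral_finsetSum _ fun i _ => integrable_finsetSum _ fun j _ => hint i j]
        exact sum_congr rfl fun i _ => integral_finsetSum _ fun j _ => hint i j
    _ ≤ ∑ i ∈ s, (K * B : ℝ) := sum_le_sum fun i _ => hrow i
    _ = K * B * #s := by rw [sum_const, nsmul_eq_mul]; ring

lemma ae_tendsto_zero_of_summable_integral_sq {g : ℕ → Ω → ℝ}
    (hg : ∀ k, Integrable (fun ω => g k ω ^ 2) μ)
    (hs : Summable fun k => ∫ ω, g k ω ^ 2 ∂μ) :
    ∀ᵐ ω ∂μ, Tendsto (fun k => g k ω) atTop (𝓝 0) := by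
  have hfin : ∫⁻ ω, ∑' k, ENNReal.ofReal (g k ω ^ 2) ∂μ ≠ ⊤ := by
    rw [lintegral_tsum fun k => (hg k).aemeasurable.ennreal_ofReal]
    simp_rw [← ofReal_integral_eq_lintegral_ofReal (hg _) (ae_of_all _ fun _ => sq_nonneg _)]
    rw [← ENNReal.ofReal_tsum_of_nonneg (fun k => integral_nonneg fun _ => sq_nonneg _) hs]
    exact ENNReal.ofReal_ne_top
  filter_upwards [ae_lt_top' (AEMeasurable.tsum fun k => (hg k).aemeasurable.ennreal_ofReal) hfin]
    with ω hω
  have hsq : Tendsto (fun k => g k ω ^ 2) atTop (𝓝 0) :=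
    (ENNReal.summable_toReal hω.ne).tendsto_atTop_zero.congr fun k =>
      ENNReal.toReal_ofReal (sq_nonneg _)
  rw [tendsto_zero_iff_abs_tendsto_zero]
  simpa [Function.comp_def, Real.sqrt_sq_eq_abs] using hsq.sqrt

lemma ae_tendsto_symmetricAverage_zero [IsFiniteMeasure μ] {V : ℤ → Ω → ℝ} {C : ℝ} {K : ℕ}
    (D : ℤ → Finset ℤ) (hmeas : ∀ n, AEStronglyMeasurable (V n) μ)
    (hbound : ∀ n, ∀ᵐ ω ∂μ, |V n ω| ≤ C) (hD : ∀ n, #(D n) ≤ K)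
    (horth : ∀ n n', n' ∉ D n → ∫ ω, V n ω * V n' ω ∂μ = 0) :
    ∀ᵐ ω ∂μ, Tendsto (symmetricAverage fun n => V n ω) atTop (𝓝 0) := by
  have hprod : ∀ n n', ∀ᵐ ω ∂μ, ‖V n ω * V n' ω‖ ≤ C ^ 2 := fun n n' => by
    filter_upwards [hbound n, hbound n'] with ω h h'
    rw [Real.norm_eq_abs, abs_mul, sq]
    exact mul_le_mul h h' (abs_nonneg _) ((abs_nonneg _).trans h)
  have hint : ∀ n n', Integrable (fun ω => V n ω * V n' ω) μ := fun n n' =>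
    Integrable.of_bound ((hmeas n).mul (hmeas n')) _ (hprod n n')
  set B := C ^ 2 * μ.real Set.univ
  have hB : ∀ n n', |∫ ω, V n ω * V n' ω ∂μ| ≤ B := fun n n' =>
    norm_integral_le_of_norm_le_const (hprod n n')
  set S : ℕ → Ω → ℝ := fun N ω => ∑ n ∈ Icc (-(N : ℤ)) N, V n ω
  have hSint : ∀ N, Integrable (fun ω => S N ω ^ 2) μ := fun N => by
    simp_rw [S, sq, sum_mul_sum]
    exact integrable_finsetSum _ fun i _ => integrable_finsetSum _ fun j _ => hint i j
  have hS : ∀ N, ∫ ω, S N ω ^ 2 ∂μ ≤ K * B * (2 * N + 1) := fun N => by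
    rw [← card_Icc_neg_self]
    exact integral_sq_sum_le_of_sparse_correlations _ D hint hB hD horth
  have hsq : ∀ k ω, symmetricAverage (fun n => V n ω) (k ^ 2) ^ 2
      = (2 * ((k ^ 2 : ℕ) : ℝ) + 1)⁻¹ ^ 2 * S (k ^ 2) ω ^ 2 := fun k ω => by
    simp only [symmetricAverage, S, one_div, mul_pow]
  have hsub : ∀ᵐ ω ∂μ,
      Tendsto (fun k => symmetricAverage (fun n => V n ω) (k ^ 2)) atTop (𝓝 0) := by
    refine ae_tendsto_zero_of_summable_integral_sq (fun k => ?_) ?_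
    · simp_rw [hsq]; exact (hSint _).const_mul _
    refine Summable.of_nonneg_of_le (fun k => integral_nonneg fun ω => sq_nonneg _) (fun k => ?_)
      (summable_inv_two_mul_sq_add_one.mul_left (K * B))
    have hden : (0 : ℝ) < 2 * ((k ^ 2 : ℕ) : ℝ) + 1 := by positivity
    simp_rw [hsq, integral_const_mul]
    calc (2 * ((k ^ 2 : ℕ) : ℝ) + 1)⁻¹ ^ 2 * ∫ ω, S (k ^ 2) ω ^ 2 ∂μ
        ≤ (2 * ((k ^ 2 : ℕ) : ℝ) + 1)⁻¹ ^ 2 * (K * B * (2 * ((k ^ 2 : ℕ) : ℝ) + 1)) := by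
          gcongr; exact hS _
      _ = K * B * (2 * ((k ^ 2 : ℕ) : ℝ) + 1)⁻¹ := by field_simp
  filter_upwards [hsub, ae_all_iff.2 hbound] with ω hω hωC
  exact tendsto_symmetricAverage_of_tendsto_comp_sq hωC hω

lemma integral_eq_two_mul_measureReal_sub_one [IsProbabilityMeasure μ] {Y : Ω → ℝ}
    (hY : Measurable Y) (hval : ∀ᵐ ω ∂μ, Y ω = 1 ∨ Y ω = -1) :
    ∫ ω, Y ω ∂μ = 2 * μ.real {ω | Y ω = 1} - 1 := by
  have hA : MeasurableSet {ω | Y ω = 1} := hY (measurableSet_singleton 1)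
  calc ∫ ω, Y ω ∂μ = ∫ ω, ({ω | Y ω = 1}.indicator (fun _ => (2 : ℝ)) ω - 1) ∂μ := by
        refine integral_congr_ae ?_
        filter_upwards [hval] with ω h
        rcases h with h | h <;> simp [Set.indicator_apply, h] <;> norm_num
    _ = 2 * μ.real {ω | Y ω = 1} - 1 := by
        rw [integral_sub ((integrable_const 2).indicator hA) (integrable_const 1),
          integral_indicator_const _ hA]
        simp [mul_comm]

variable {X : ℤ → Ω → ℝ} {q : ℝ}

lemma integral_mul_eq_sq (hmeas : ∀ n, Measurable (X n)) (hindep : iIndepFun X μ)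
    (hmean : ∀ n, ∫ ω, X n ω ∂μ = q) {a b : ℤ} (hab : a ≠ b) :
    ∫ ω, X a ω * X b ω ∂μ = q ^ 2 := by
  rw [(hindep.indepFun hab).integral_fun_mul_eq_mul_integral (hmeas a).aestronglyMeasurable
    (hmeas b).aestronglyMeasurable, hmean, hmean, sq]

lemma integral_centered_shift_mul_eq_zero [IsProbabilityMeasure μ]
    (hmeas : ∀ n, Measurable (X n)) (hindep : iIndepFun X μ) (hint : ∀ n, Integrable (X n) μ)
    (hmean : ∀ n, ∫ ω, X n ω ∂μ = q) (c : ℤ → ℝ) {m n n' : ℤ} (hm : m ≠ 0)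
    (hn' : n' ∉ ({n - m, n, n + m} : Finset ℤ)) :
    ∫ ω, c n * (X n ω * X (n - m) ω - q ^ 2) * (c n' * (X n' ω * X (n' - m) ω - q ^ 2)) ∂μ
      = 0 := by
  simp only [mem_insert, mem_singleton, not_or] at hn'
  have hcenter : ∀ k, ∫ ω, c k * (X k ω * X (k - m) ω - q ^ 2) ∂μ = 0 := fun k => by
    have hk : k ≠ k - m := by omega
    have hprod : Integrable (fun ω => X k ω * X (k - m) ω) μ :=
      (hindep.indepFun hk).integrable_mul (hint _) (hint _)
    rw [integral_const_mul, integral_sub hprod (integrable_const _),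
      integral_mul_eq_sq hmeas hindep hmean hk]
    simp
  have hφ : ∀ k, Measurable fun t : ℝ => c k * (t - q ^ 2) := fun k => by fun_prop
  have hind := (hindep.indepFun_mul_mul hmeas n (n - m) n' (n' - m) (by omega) (by omega)
    (by omega) (by omega)).comp (hφ n) (hφ n')
  exact (hind.integral_fun_mul_eq_mul_integral (by fun_prop) (by fun_prop)).trans
    (by simp [hcenter])

lemma ae_tendsto_symmetricAverage_centered_shift_mul [IsProbabilityMeasure μ]
    (hmeas : ∀ n, Measurable (X n)) (hindep : iIndepFun X μ)
    (hbound : ∀ n, ∀ᵐ ω ∂μ, |X n ω| ≤ 1) (hmean : ∀ n, ∫ ω, X n ω ∂μ = q)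
    {c : ℤ → ℝ} (hc : ∀ n, |c n| ≤ 1) {m : ℤ} (hm : m ≠ 0) :
    ∀ᵐ ω ∂μ, Tendsto (symmetricAverage fun n => c n * (X n ω * X (n - m) ω - q ^ 2))
      atTop (𝓝 0) := by
  have hint : ∀ n, Integrable (X n) μ := fun n =>
    Integrable.of_bound (hmeas n).aestronglyMeasurable 1 (hbound n)
  have hVbound : ∀ n, ∀ᵐ ω ∂μ, |c n * (X n ω * X (n - m) ω - q ^ 2)| ≤ 1 + q ^ 2 := fun n => by
    filter_upwards [hbound n, hbound (n - m)] with ω h₁ h₂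
    have hXX : |X n ω * X (n - m) ω| ≤ 1 := by
      rw [abs_mul]; exact mul_le_one₀ h₁ (abs_nonneg _) h₂
    calc |c n * (X n ω * X (n - m) ω - q ^ 2)| ≤ 1 * (1 + q ^ 2) := by
          rw [abs_mul]
          gcongr
          · exact hc n
          · exact (abs_sub _ _).trans (by rw [abs_sq]; linarith)
      _ = 1 + q ^ 2 := one_mul _
  exact ae_tendsto_symmetricAverage_zero (fun n => {n - m, n, n + m}) (fun n => by fun_prop)
    hVbound (fun n => card_le_three) fun n n' hn' =>
      integral_centered_shift_mul_eq_zero hmeas hindep hint hmean c hm hn'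

end Probability

theorem bernoullisation_homometric_general
    {Ω : Type*} [MeasurableSpace Ω] (P : Measure Ω) [IsProbabilityMeasure P]
    (p : ℝ)
    (w : ℤ → ℝ) (hw : ∀ n, w n = 1 ∨ w n = -1)
    (X : ℤ → Ω → ℝ)
    (hmeas : ∀ n, Measurable (X n))
    (hindep : iIndepFun X P)
    (hval : ∀ n, ∀ᵐ ω ∂P, X n ω = 1 ∨ X n ω = -1)
    (hdist : ∀ n, P {ω | X n ω = 1} = ENNReal.ofReal p)
    (hauto : ∀ m : ℤ,
      Tendsto
        (fun N : ℕ => (1 / (2 * (N : ℝ) + 1)) *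
          ∑ n ∈ Finset.Icc (-(N : ℤ)) (N : ℤ), w n * w (n - m))
        atTop (nhds (if m = 0 then 1 else 0))) :
    ∀ᵐ ω ∂P, ∀ m : ℤ,
      Tendsto
        (fun N : ℕ => (1 / (2 * (N : ℝ) + 1)) *
          ∑ n ∈ Finset.Icc (-(N : ℤ)) (N : ℤ),
            (w n * X n ω) * (w (n - m) * X (n - m) ω))
        atTop (nhds (if m = 0 then 1 else 0)) := by
  set q := 2 * (ENNReal.ofReal p).toReal - 1
  have hmean : ∀ n, ∫ ω, X n ω ∂P = q := fun n => by
    rw [integral_eq_two_mul_measureReal_sub_one (hmeas n) (hval n), measureReal_def, hdist n]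
  have habs : ∀ n, ∀ᵐ ω ∂P, |X n ω| = 1 := fun n => by
    filter_upwards [hval n] with ω h
    rcases h with h | h <;> simp [h]
  have habs_w : ∀ n, |w n| = 1 := fun n => by rcases hw n with h | h <;> simp [h]
  rw [ae_all_iff]
  intro m
  rcases eq_or_ne m 0 with rfl | hm
  · filter_upwards [ae_all_iff.2 habs] with ω hω
    refine (hauto 0).congr fun N => congrArg _ (sum_congr rfl fun n _ => ?_)
    have hsq : X n ω * X n ω = 1 := by rw [← abs_mul_abs_self, hω n, one_mul]
    rw [sub_zero]
    linear_combination -(w n * w n) * hsq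
  · have hdet := hauto m
    rw [if_neg hm] at hdet ⊢
    filter_upwards [ae_tendsto_symmetricAverage_centered_shift_mul hmeas hindep
      (fun n => (habs n).mono fun _ h => h.le) hmean
      (c := fun n => w n * w (n - m)) (fun n => by rw [abs_mul, habs_w, habs_w, one_mul]) hm]
      with ω hω
    have hsum := hω.add (hdet.const_mul (q ^ 2))
    rw [mul_zero, add_zero] at hsum
    refine hsum.congr fun N => ?_
    refine (symmetricAverage_add_const_mul _ (fun n => w n * w (n - m)) (q ^ 2) N).symm.trans ?_
    exact congrArg _ (sum_congr rfl fun n _ => by ring)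

/-- Bernoullisation: if the deterministic autocorrelation of `w` is the Kronecker
delta, then almost surely the autocorrelation of the Bernoullised comb
`n ↦ w(n) X(n)` is again the Kronecker delta, independently of `p`. -/
theorem bernoullisation_homometric
    {Ω : Type*} [MeasurableSpace Ω] (P : Measure Ω) [IsProbabilityMeasure P]
    (p : ℝ) (hp0 : 0 ≤ p) (hp1 : p ≤ 1)
    (w : ℤ → ℝ) (hw : ∀ n, w n = 1 ∨ w n = -1)
    (X : ℤ → Ω → ℝ)
    (hmeas : ∀ n, Measurable (X n))
    (hindep : iIndepFun X P)
    (hval : ∀ n, ∀ᵐ ω ∂P, X n ω = 1 ∨ X n ω = -1)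
    (hdist : ∀ n, P {ω | X n ω = 1} = ENNReal.ofReal p)
    (hdist' : ∀ n, P {ω | X n ω = -1} = ENNReal.ofReal (1 - p))
    (hauto : ∀ m : ℤ,
      Tendsto
        (fun N : ℕ => (1 / (2 * (N : ℝ) + 1)) *
          ∑ n ∈ Finset.Icc (-(N : ℤ)) (N : ℤ), w n * w (n - m))
        atTop (nhds (if m = 0 then 1 else 0))) :
    ∀ᵐ ω ∂P, ∀ m : ℤ,
      Tendsto
        (fun N : ℕ => (1 / (2 * (N : ℝ) + 1)) *
          ∑ n ∈ Finset.Icc (-(N : ℤ)) (N : ℤ),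
            (w n * X n ω) * (w (n - m) * X (n - m) ω))
        atTop (nhds (if m = 0 then 1 else 0)) :=
  bernoullisation_homometric_general P p w hw X hmeas hindep hval hdist hauto
end
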